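/- Under the saw map setup, assume 1/α_{k*} + 1/β_{k*} ≥ 1. Then for every x ∈ J* with x ∉ Σ there exists n ∈ ℕ such that T^i(x) ∈ J_{k*} for all i ≥ n. -/

import Mathlib

/-- `T` is affine (linear) on the segment `[a, b]`. -/
def AffOn (T : ℝ → ℝ) (a b : ℝ) : Prop :=
  ∃ m c : ℝ, ∀ x ∈ Set.Icc a b, T x = m * x + c

/-- The "saw map" setup: sequences `q, r, p`, the map `T`, fixed points `e k ∈ (q (k+1), r k)`
and `ehat k ∈ (r k, q k)`, and the index `kstar`, subject to all standing assumptions. -/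
structure SawMapSetup where
  q : ℕ → ℝ
  r : ℕ → ℝ
  p : ℕ → ℝ
  T : ℝ → ℝ
  e : ℕ → ℝ
  ehat : ℕ → ℝ
  kstar : ℕ
  hq_pos : ∀ k, 1 ≤ k → 0 < q k
  hr_pos : ∀ k, 0 < r k
  hq1r0 : q 1 < r 0
  hrq : ∀ k, 1 ≤ k → r k < q k
  hqr : ∀ k, 1 ≤ k → q (k + 1) < r k
  hq_lim : Filter.Tendsto q Filter.atTop (nhds 0)
  hr_lim : Filter.Tendsto r Filter.atTop (nhds 0)
  hp_pos : ∀ k, 0 < p k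
  hp_dec : ∀ k, p (k + 1) < p k
  hp0r0 : p 0 < r 0
  hpr : ∀ k, 1 ≤ k → r k < p k
  hT0 : T 0 = 0
  hTq : ∀ k, 1 ≤ k → T (q k) = 0
  hTr : ∀ k, T (r k) = p k
  haff0 : AffOn T (q 1) (r 0)
  haff1 : ∀ k, 1 ≤ k → AffOn T (q (k + 1)) (r k)
  haff2 : ∀ k, 1 ≤ k → AffOn T (r k) (q k)
  hTJ : Set.MapsTo T (Set.Icc 0 (r 0)) (Set.Icc 0 (r 0))
  halpha1 : ∀ k, 1 ≤ k → 1 < p k / (r k - q (k + 1))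
  he_mem : ∀ k, 1 ≤ k → e k ∈ Set.Ioo (q (k + 1)) (r k)
  he_fix : ∀ k, 1 ≤ k → T (e k) = e k
  he_uniq : ∀ k, 1 ≤ k → ∀ x ∈ Set.Ioo (q (k + 1)) (r k), T x = x → x = e k
  hehat_mem : ∀ k, 1 ≤ k → ehat k ∈ Set.Ioo (r k) (q k)
  hehat_fix : ∀ k, 1 ≤ k → T (ehat k) = ehat k
  hehat_uniq : ∀ k, 1 ≤ k → ∀ x ∈ Set.Ioo (r k) (q k), T x = x → x = ehat k
  halpha_mono : ∀ k, p k / (r k - q (k + 1)) < p (k + 1) / (r (k + 1) - q (k + 2))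
  hbeta_mono : ∀ k, 1 ≤ k → p k / (q k - r k) < p (k + 1) / (q (k + 1) - r (k + 1))
  hkstar : 1 ≤ kstar
  hp_e_big : ∀ k, kstar + 1 ≤ k → e (k - 1) < p k
  hp_e_small : 2 ≤ kstar → ∀ k, 2 ≤ k → k ≤ kstar → p k < e (k - 1)
  htech : ∀ k, 1 ≤ k → k < kstar → p k < q k + e k / (p (k - 1) / (r (k - 1) - q k))

namespace SawMapSetup

variable (S : SawMapSetup)

/-- Absolute value of the slope of `T` on `[q (k+1), r k]`. -/
noncomputable def alpha (k : ℕ) : ℝ := S.p k / (S.r k - S.q (k + 1))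

/-- Absolute value of the slope of `T` on `[r k, q k]`. -/
noncomputable def beta (k : ℕ) : ℝ := S.p k / (S.q k - S.r k)

/-- The invariant segment `J* = [0, p kstar]`. -/
def Jstar : Set ℝ := Set.Icc 0 (S.p S.kstar)

/-- The segment `J_k = [e k, p k]`. -/
def Jk (k : ℕ) : Set ℝ := Set.Icc (S.e k) (S.p k)

/-- The segment `G_k = [T (p k), p k]`. -/
def Gk (k : ℕ) : Set ℝ := Set.Icc (S.T (S.p k)) (S.p k)

/-- The set `Ω` of points of `J*` that are eventually mapped to `0`. -/
def Omega : Set ℝ := {x | x ∈ S.Jstar ∧ ∃ n, 1 ≤ n ∧ S.T^[n] x = 0}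

/-- The set `Σ`, the closure of `Ω`. -/
def Sig : Set ℝ := closure S.Omega

end SawMapSetup

/-!
If the orbit of `x` ever enters `J kstar` it stays there, since `T` maps `J kstar` into itself;
this is where `1 / α kstar + 1 / β kstar ≥ 1`, i.e. `p kstar ≤ q kstar - q (kstar + 1)`, is used.
Otherwise the orbit stays in `[0, e kstar)`. As `x ∉ Σ`, a small interval around `x` contains no
point that is eventually mapped to `0`, so none of its images contains `0` or a zero `q j` of
`T`. An image interval below `e kstar` therefore lies on a single tooth of the saw, where `T`
stretches it by a factor at least `1 / rho > 1` (here `p (kstar + 1) > e kstar` is used). Lengths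
being bounded, some image must reach `e kstar`, and from then on the images `[c, e kstar]` are
pushed away from the repelling fixed point `e kstar` by the factor `α kstar` until they contain
`q (kstar + 1)`, a contradiction.
-/

open Set Filter Topology

lemma AffOn.apply_eq {T : ℝ → ℝ} {u v : ℝ} (h : AffOn T u v) (huv : u < v) {y : ℝ}
    (hy : y ∈ Icc u v) : T y = T u + (T v - T u) / (v - u) * (y - u) := by
  obtain ⟨m, c, h⟩ := h
  rw [h y hy, h u ⟨le_rfl, huv.le⟩, h v ⟨huv.le, le_rfl⟩]
  field_simp [(sub_pos.2 huv).ne']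
  ring

lemma exists_lt_le_of_tendsto_zero {q : ℕ → ℝ} (hq : Tendsto q atTop (𝓝 0)) {y : ℝ}
    (hy : 0 < y) {k : ℕ} (hk : y ≤ q k) : ∃ j, k ≤ j ∧ q (j + 1) < y ∧ y ≤ q j := by
  by_contra! H
  have hle : ∀ j, k ≤ j → y ≤ q j := fun j hj => by
    induction j, hj using Nat.le_induction with
    | base => exact hk
    | succ j hj ih => exact not_lt.1 fun hlt => (H j hj hlt).not_ge ih
  obtain ⟨j, hlt, hj⟩ := ((hq.eventually (gt_mem_nhds hy)).and (eventually_ge_atTop k)).exists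
  exact (hle j hj).not_gt hlt

lemma not_forall_le_pow_mul {ε ρ B : ℝ} (hε : 0 < ε) (hρ₀ : 0 ≤ ρ) (hρ₁ : ρ < 1) :
    ¬ ∀ m : ℕ, ε ≤ ρ ^ m * B := by
  intro h
  have hlim : Tendsto (fun m : ℕ => ρ ^ m * B) atTop (𝓝 0) := by
    simpa using (tendsto_pow_atTop_nhds_zero_of_lt_one hρ₀ hρ₁).mul_const B
  obtain ⟨m, hm⟩ := (hlim.eventually (gt_mem_nhds hε)).exists
  exact (h m).not_gt hm

def tent (α β u v y : ℝ) : ℝ := min (α * (y - u)) (β * (v - y))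

lemma min_tent_le_tent {α β u v s y t : ℝ} (hα : 0 ≤ α) (hβ : 0 ≤ β) (hsy : s ≤ y)
    (hyt : y ≤ t) : min (tent α β u v s) (tent α β u v t) ≤ tent α β u v y :=
  (min_le_min (min_le_left _ _) (min_le_right _ _)).trans
    (min_le_min (by gcongr) (by gcongr))

lemma sub_le_tent {α β u v a b M : ℝ} (hα : 0 < α) (hβ : 0 < β) (hab : a ≤ b)
    (hM : ∀ y ∈ Icc a b, tent α β u v y ≤ M) :
    b - a ≤ (M - tent α β u v a) / α + (M - tent α β u v b) / β := by
  have hMa := hM a ⟨le_rfl, hab⟩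
  have hMb := hM b ⟨hab, le_rfl⟩
  unfold tent at *
  rcases le_total (α * (b - u)) (β * (v - b)) with hb | hb
  · have ha : α * (a - u) ≤ β * (v - a) := by nlinarith
    rw [min_eq_left ha] at *
    rw [min_eq_left hb] at *
    have h1 : b - a ≤ (M - α * (a - u)) / α := by rw [le_div_iff₀ hα]; nlinarith
    have h2 : 0 ≤ (M - α * (b - u)) / β := div_nonneg (by linarith) hβ.le
    linarith
  rcases le_total (β * (v - a)) (α * (a - u)) with ha | ha
  · have hb' : β * (v - b) ≤ α * (b - u) := by nlinarith
    rw [min_eq_right ha] at *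
    rw [min_eq_right hb'] at *
    have h1 : 0 ≤ (M - β * (v - a)) / α := div_nonneg (by linarith) hα.le
    have h2 : b - a ≤ (M - β * (v - b)) / β := by rw [le_div_iff₀ hβ]; nlinarith
    linarith
  -- the peak `w` of the tent lies in `[a, b]`
  set w := (α * u + β * v) / (α + β) with hw
  have hαβ : 0 < α + β := add_pos hα hβ
  have hpeak : α * (w - u) = β * (v - w) := by rw [hw]; field_simp; ring
  have haw : a ≤ w := by rw [hw, le_div_iff₀ hαβ]; nlinarith
  have hwb : w ≤ b := by rw [hw, div_le_iff₀ hαβ]; nlinarith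
  have hMw := hM w ⟨haw, hwb⟩
  rw [min_eq_left ha] at *
  rw [min_eq_right hb] at *
  rw [hpeak, min_self] at hMw
  have h1 : w - a ≤ (M - α * (a - u)) / α := by rw [le_div_iff₀ hα]; nlinarith
  have h2 : b - w ≤ (M - β * (v - b)) / β := by rw [le_div_iff₀ hβ]; nlinarith
  linarith

lemma exists_tent_image_Icc {α β u v a b : ℝ} (hα : 0 < α) (hβ : 0 < β) (hab : a ≤ b) :
    ∃ a' b', tent α β u v '' Icc a b = Icc a' b' ∧ b - a ≤ (1 / α + 1 / β) * (b' - a') := by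
  have hcont : ContinuousOn (tent α β u v) (Icc a b) := by unfold tent; fun_prop
  refine ⟨_, _, hcont.image_Icc hab, ?_⟩
  set m := sInf (tent α β u v '' Icc a b)
  set M := sSup (tent α β u v '' Icc a b)
  have hm (y : ℝ) (hy : y ∈ Icc a b) : m ≤ tent α β u v y := hcont.sInf_image_Icc_le hy
  calc b - a ≤ (M - tent α β u v a) / α + (M - tent α β u v b) / β :=
        sub_le_tent hα hβ hab fun y hy => hcont.le_sSup_image_Icc hy
    _ ≤ (M - m) / α + (M - m) / β := by
        gcongr
        exacts [hm a ⟨le_rfl, hab⟩, hm b ⟨hab, le_rfl⟩]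
    _ = (1 / α + 1 / β) * (M - m) := by ring

namespace SawMapSetup

variable (S : SawMapSetup) {j : ℕ}

lemma alpha_pos (hj : 1 ≤ j) : 0 < S.alpha j := div_pos (S.hp_pos j) (sub_pos.2 (S.hqr j hj))

lemma beta_pos (hj : 1 ≤ j) : 0 < S.beta j := div_pos (S.hp_pos j) (sub_pos.2 (S.hrq j hj))

lemma alpha_mul (hj : 1 ≤ j) : S.alpha j * (S.r j - S.q (j + 1)) = S.p j :=
  div_mul_cancel₀ _ (sub_pos.2 (S.hqr j hj)).ne'

lemma beta_mul (hj : 1 ≤ j) : S.beta j * (S.q j - S.r j) = S.p j :=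
  div_mul_cancel₀ _ (sub_pos.2 (S.hrq j hj)).ne'

lemma one_div_alpha_add_one_div_beta (j : ℕ) :
    1 / S.alpha j + 1 / S.beta j = (S.q j - S.q (j + 1)) / S.p j := by
  rw [alpha, beta, one_div_div, one_div_div, ← add_div]
  ring_nf

lemma alpha_strictMono : StrictMono S.alpha := strictMono_nat_of_lt_succ S.halpha_mono

lemma beta_le_beta {i : ℕ} (hi : 1 ≤ i) (hij : i ≤ j) : S.beta i ≤ S.beta j := by
  induction j, hij using Nat.le_induction with
  | base => exact le_rfl
  | succ n hn ih => exact ih.trans (S.hbeta_mono n (hi.trans hn)).le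

lemma p_antitone : Antitone S.p := (strictAnti_nat_of_succ_lt S.hp_dec).antitone

lemma T_eq_of_le_r (hj : 1 ≤ j) {y : ℝ} (hy : y ∈ Icc (S.q (j + 1)) (S.r j)) :
    S.T y = S.alpha j * (y - S.q (j + 1)) := by
  rw [(S.haff1 j hj).apply_eq (S.hqr j hj) hy, S.hTq (j + 1) (by omega), S.hTr, alpha]
  ring

lemma T_eq_of_r_le (hj : 1 ≤ j) {y : ℝ} (hy : y ∈ Icc (S.r j) (S.q j)) :
    S.T y = S.beta j * (S.q j - y) := by
  rw [(S.haff2 j hj).apply_eq (S.hrq j hj) hy, S.hTq j hj, S.hTr, beta]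
  field_simp [(sub_pos.2 (S.hrq j hj)).ne']
  ring

lemma eqOn_tent (hj : 1 ≤ j) :
    EqOn S.T (tent (S.alpha j) (S.beta j) (S.q (j + 1)) (S.q j))
      (Icc (S.q (j + 1)) (S.q j)) := by
  intro y hy
  have hα := S.alpha_pos hj
  have hβ := S.beta_pos hj
  have hpα := S.alpha_mul hj
  have hpβ := S.beta_mul hj
  rcases le_total y (S.r j) with hyr | hyr
  · rw [S.T_eq_of_le_r hj ⟨hy.1, hyr⟩, tent, min_eq_left (by nlinarith)]
  · rw [S.T_eq_of_r_le hj ⟨hyr, hy.2⟩, tent, min_eq_right (by nlinarith)]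

lemma T_mem_Icc_zero_p (hj : 1 ≤ j) {y : ℝ} (hy : y ∈ Icc (S.q (j + 1)) (S.q j)) :
    S.T y ∈ Icc 0 (S.p j) := by
  have hα := S.alpha_pos hj
  have hβ := S.beta_pos hj
  have hpα := S.alpha_mul hj
  have hpβ := S.beta_mul hj
  rcases le_total y (S.r j) with hyr | hyr
  · rw [S.T_eq_of_le_r hj ⟨hy.1, hyr⟩]
    exact ⟨by nlinarith [hy.1], by nlinarith⟩
  · rw [S.T_eq_of_r_le hj ⟨hyr, hy.2⟩]
    exact ⟨by nlinarith [hy.2], by nlinarith⟩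

lemma image_Icc_of_le_r (hj : 1 ≤ j) {a b : ℝ} (ha : S.q (j + 1) ≤ a) (hab : a ≤ b)
    (hb : b ≤ S.r j) : S.T '' Icc a b = Icc (S.T a) (S.T b) := by
  have hT : EqOn S.T (S.alpha j * · + -(S.alpha j * S.q (j + 1))) (Icc a b) := fun y hy => by
    rw [S.T_eq_of_le_r hj ⟨ha.trans hy.1, hy.2.trans hb⟩]
    ring
  rw [hT.image_eq, image_affine_Icc' (S.alpha_pos hj), hT ⟨le_rfl, hab⟩, hT ⟨hab, le_rfl⟩]

variable {S}

lemma e_mem : S.e S.kstar ∈ Ioo (S.q (S.kstar + 1)) (S.r S.kstar) := S.he_mem _ S.hkstar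

lemma e_lt_p : S.e S.kstar < S.p S.kstar := S.e_mem.2.trans (S.hpr _ S.hkstar)

lemma e_eq_alpha_mul : S.e S.kstar = S.alpha S.kstar * (S.e S.kstar - S.q (S.kstar + 1)) := by
  conv_lhs => rw [← S.he_fix _ S.hkstar]
  exact S.T_eq_of_le_r S.hkstar ⟨S.e_mem.1.le, S.e_mem.2.le⟩

lemma p_le_q_sub_q (hslope : 1 ≤ 1 / S.alpha S.kstar + 1 / S.beta S.kstar) :
    S.p S.kstar ≤ S.q S.kstar - S.q (S.kstar + 1) := by
  rwa [one_div_alpha_add_one_div_beta, one_le_div (S.hp_pos _)] at hslope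

lemma p_lt_q (hpq : S.p S.kstar ≤ S.q S.kstar - S.q (S.kstar + 1)) :
    S.p S.kstar < S.q S.kstar := by
  linarith [S.hq_pos (S.kstar + 1) (by omega)]

lemma e_le_T_p (hpq : S.p S.kstar ≤ S.q S.kstar - S.q (S.kstar + 1)) :
    S.e S.kstar ≤ S.T (S.p S.kstar) := by
  rw [S.T_eq_of_r_le S.hkstar ⟨(S.hpr _ S.hkstar).le, (p_lt_q hpq).le⟩, beta,
    div_mul_eq_mul_div, le_div_iff₀ (sub_pos.2 (S.hrq _ S.hkstar))]
  have hfix : S.e S.kstar * (S.r S.kstar - S.q (S.kstar + 1)) =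
      S.p S.kstar * (S.e S.kstar - S.q (S.kstar + 1)) := by
    conv_lhs => rw [S.e_eq_alpha_mul]
    rw [mul_right_comm, S.alpha_mul S.hkstar]
  nlinarith [mul_nonneg (sub_nonneg.2 S.e_lt_p.le)
    (sub_nonneg.2 (le_sub_comm.1 hpq : S.q (S.kstar + 1) ≤ S.q S.kstar - S.p S.kstar))]

lemma mapsTo_Jk (hpq : S.p S.kstar ≤ S.q S.kstar - S.q (S.kstar + 1)) :
    MapsTo S.T (S.Jk S.kstar) (S.Jk S.kstar) := by
  intro y hy
  have hy' : y ∈ Icc (S.q (S.kstar + 1)) (S.q S.kstar) :=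
    ⟨S.e_mem.1.le.trans hy.1, hy.2.trans (p_lt_q hpq).le⟩
  have hp : S.p S.kstar ∈ Icc (S.q (S.kstar + 1)) (S.q S.kstar) :=
    ⟨(S.e_mem.1.trans S.e_lt_p).le, (p_lt_q hpq).le⟩
  have he : S.e S.kstar ∈ Icc (S.q (S.kstar + 1)) (S.q S.kstar) :=
    ⟨S.e_mem.1.le, hy'.2.trans' hy.1⟩
  have hT := S.eqOn_tent S.hkstar
  refine ⟨?_, (S.T_mem_Icc_zero_p S.hkstar hy').2⟩
  have hconc := min_tent_le_tent (u := S.q (S.kstar + 1)) (v := S.q S.kstar)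
    (S.alpha_pos S.hkstar).le (S.beta_pos S.hkstar).le hy.1 hy.2
  rw [← hT hy', ← hT he, ← hT hp, S.he_fix _ S.hkstar, min_eq_left (e_le_T_p hpq)] at hconc
  exact hconc

lemma mapsTo_Jstar (hpq : S.p S.kstar ≤ S.q S.kstar - S.q (S.kstar + 1)) :
    MapsTo S.T S.Jstar S.Jstar := by
  intro y ⟨hy0, hyp⟩
  rcases hy0.eq_or_lt with rfl | hy0
  · rw [S.hT0]
    exact ⟨le_rfl, (S.hp_pos _).le⟩
  obtain ⟨j, hj, hjy, hyj⟩ :=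
    exists_lt_le_of_tendsto_zero S.hq_lim hy0 (hyp.trans (p_lt_q hpq).le)
  have hTy := S.T_mem_Icc_zero_p (S.hkstar.trans hj) ⟨hjy.le, hyj⟩
  exact ⟨hTy.1, hTy.2.trans (S.p_antitone hj)⟩

variable (S) in
/-- `1 / rho` bounds from below the stretching of `T` on intervals below `e kstar` that avoid the
zeros of `T`: slope `alpha kstar` on the last tooth, and at least
`1 / (1 / alpha j + 1 / beta j)` on the teeth `j > kstar`, whose slopes increase with `j`. -/
noncomputable def rho : ℝ :=
  max (1 / S.alpha S.kstar) (1 / S.alpha (S.kstar + 1) + 1 / S.beta (S.kstar + 1))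

lemma rho_nonneg : 0 ≤ S.rho :=
  le_max_of_le_left (one_div_nonneg.2 (S.alpha_pos S.hkstar).le)

lemma rho_lt_one : S.rho < 1 := by
  refine max_lt ((div_lt_one (S.alpha_pos S.hkstar)).2 (S.halpha1 _ S.hkstar)) ?_
  have hep : S.e S.kstar < S.p (S.kstar + 1) := by
    simpa using S.hp_e_big (S.kstar + 1) le_rfl
  rw [one_div_alpha_add_one_div_beta, div_lt_one (S.hp_pos _)]
  linarith [S.hq_pos (S.kstar + 2) (by omega), S.e_mem.1]

lemma exists_image_Icc_eq {a b : ℝ} (ha : 0 < a) (hab : a ≤ b) (hbr : b ≤ S.r S.kstar)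
    (hq : ∀ j, 1 ≤ j → S.q j ∉ Icc a b) :
    ∃ a' b', S.T '' Icc a b = Icc a' b' ∧ b - a ≤ S.rho * (b' - a') := by
  rcases lt_or_ge (S.q (S.kstar + 1)) a with hqa | haq
  · refine ⟨_, _, S.image_Icc_of_le_r S.hkstar hqa.le hab hbr, ?_⟩
    have hα := S.alpha_pos S.hkstar
    rw [S.T_eq_of_le_r S.hkstar ⟨hqa.le, hab.trans hbr⟩,
      S.T_eq_of_le_r S.hkstar ⟨hqa.le.trans hab, hbr⟩]
    calc b - a = 1 / S.alpha S.kstar * (S.alpha S.kstar * (b - S.q (S.kstar + 1)) -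
          S.alpha S.kstar * (a - S.q (S.kstar + 1))) := by field_simp; ring
      _ ≤ _ := mul_le_mul_of_nonneg_right (le_max_left _ _) (by nlinarith)
  obtain ⟨j, hj, hja, haj⟩ := exists_lt_le_of_tendsto_zero S.hq_lim ha haq
  have hj1 : 1 ≤ j := by omega
  have hbj : b < S.q j := lt_of_not_ge fun h => hq j hj1 ⟨haj, h⟩
  obtain ⟨a', b', himg, hlen⟩ := exists_tent_image_Icc (u := S.q (j + 1)) (v := S.q j)
    (S.alpha_pos hj1) (S.beta_pos hj1) hab
  have hT := (S.eqOn_tent hj1).mono (Icc_subset_Icc hja.le hbj.le)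
  refine ⟨a', b', hT.image_eq.trans himg, hlen.trans ?_⟩
  have ha'b' : a' ≤ b' := nonempty_Icc.1 (himg ▸ (nonempty_Icc.2 hab).image _)
  gcongr
  refine le_max_of_le_right (add_le_add ?_ ?_)
  · exact one_div_le_one_div_of_le (S.alpha_pos (by omega)) (S.alpha_strictMono.monotone hj)
  · exact one_div_le_one_div_of_le (S.beta_pos (by omega)) (S.beta_le_beta (by omega) hj)

lemma T_ne_zero_of_mem_image {I : Set ℝ} (hI : ∀ y ∈ I, ∀ n, S.T^[n + 1] y ≠ 0) {n : ℕ}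
    {z : ℝ} (hz : z ∈ S.T^[n] '' I) : S.T z ≠ 0 := by
  obtain ⟨y, hy, rfl⟩ := hz
  rw [← Function.iterate_succ_apply' S.T]
  exact hI y hy n

lemma pos_of_Icc_subset_image {I : Set ℝ} (hI : ∀ y ∈ I, ∀ n, S.T^[n + 1] y ≠ 0) {n : ℕ}
    {a b : ℝ} (hsub : Icc a b ⊆ S.T^[n] '' I) (hb : 0 ≤ b) : 0 < a :=
  lt_of_not_ge fun ha => T_ne_zero_of_mem_image hI (hsub ⟨ha, hb⟩) S.hT0

lemma image_iterate_succ (n : ℕ) (I : Set ℝ) : S.T^[n + 1] '' I = S.T '' (S.T^[n] '' I) := by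
  rw [Function.iterate_succ', image_comp]

lemma not_Icc_e_subset_image {I : Set ℝ} (hI : ∀ y ∈ I, ∀ n, S.T^[n + 1] y ≠ 0) {n : ℕ}
    {a : ℝ} (hqa : S.q (S.kstar + 1) < a) (hae : a < S.e S.kstar) :
    ¬ Icc a (S.e S.kstar) ⊆ S.T^[n] '' I := by
  intro hsub
  set e := S.e S.kstar
  set q' := S.q (S.kstar + 1)
  set α := S.alpha S.kstar
  have hα : 1 < α := S.halpha1 _ S.hkstar
  -- below the repelling fixed point `e`, the gap to `e` is multiplied by `α` at each step
  have key : ∀ m : ℕ, ∃ c, q' < c ∧ c < e ∧ Icc c e ⊆ S.T^[n + m] '' I ∧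
      e - a ≤ (1 / α) ^ m * (e - c) := by
    intro m
    induction m with
    | zero => exact ⟨a, hqa, hae, hsub, by simp⟩
    | succ m ih =>
      obtain ⟨c, hqc, hce, hc, hlen⟩ := ih
      have hgap : e - S.T c = α * (e - c) := by
        rw [S.T_eq_of_le_r S.hkstar ⟨hqc.le, hce.le.trans S.e_mem.2.le⟩]
        linear_combination S.e_eq_alpha_mul
      have himg : Icc (S.T c) e ⊆ S.T^[n + (m + 1)] '' I := by
        calc Icc (S.T c) e = S.T '' Icc c e := by
              rw [S.image_Icc_of_le_r S.hkstar hqc.le hce.le S.e_mem.2.le, S.he_fix _ S.hkstar]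
          _ ⊆ S.T '' (S.T^[n + m] '' I) := image_mono hc
          _ = S.T^[n + (m + 1)] '' I := (image_iterate_succ _ _).symm
      have hTce : S.T c < e := by nlinarith
      have hqTc : q' < S.T c := lt_of_not_ge fun h =>
        T_ne_zero_of_mem_image hI (himg ⟨h, S.e_mem.1.le⟩) (S.hTq _ (by omega))
      refine ⟨S.T c, hqTc, hTce, himg, hlen.trans_eq ?_⟩
      rw [hgap, pow_succ, mul_assoc, ← mul_assoc (1 / α), one_div_mul_cancel (by positivity),
        one_mul]
  refine not_forall_le_pow_mul (B := e - q') (sub_pos.2 hae) (by positivity)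
    ((div_lt_one (by linarith)).2 hα) fun m => ?_
  obtain ⟨c, hqc, -, -, hlen⟩ := key m
  exact hlen.trans (by gcongr)

lemma false_of_forall_iterate_mem_Ico {a₀ b₀ x : ℝ}
    (hI : ∀ y ∈ Icc a₀ b₀, ∀ n, S.T^[n + 1] y ≠ 0) (hab : a₀ < b₀) (hb₀ : b₀ < S.e S.kstar)
    (hx : x ∈ Icc a₀ b₀) (horb : ∀ n, S.T^[n] x ∈ Ico 0 (S.e S.kstar)) : False := by
  have key : ∀ m : ℕ, ∃ a b, Icc a b ⊆ S.T^[m] '' Icc a₀ b₀ ∧ S.T^[m] x ∈ Icc a b ∧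
      b < S.e S.kstar ∧ b₀ - a₀ ≤ S.rho ^ m * (b - a) := by
    intro m
    induction m with
    | zero => exact ⟨a₀, b₀, by simp, hx, hb₀, by simp⟩
    | succ m ih =>
      obtain ⟨a, b, hsub, hy, hbe, hlen⟩ := ih
      have ha := pos_of_Icc_subset_image hI hsub ((horb m).1.trans hy.2)
      have hq : ∀ j, 1 ≤ j → S.q j ∉ Icc a b := fun j hj hqj =>
        T_ne_zero_of_mem_image hI (hsub hqj) (S.hTq j hj)
      obtain ⟨a', b', himg, hlen'⟩ :=
        exists_image_Icc_eq ha (hy.1.trans hy.2) (hbe.le.trans S.e_mem.2.le) hq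
      have hsub' : Icc a' b' ⊆ S.T^[m + 1] '' Icc a₀ b₀ := by
        rw [← himg, image_iterate_succ]
        exact image_mono hsub
      have hy' : S.T^[m + 1] x ∈ Icc a' b' := by
        rw [← himg, Function.iterate_succ_apply']
        exact mem_image_of_mem _ hy
      rcases lt_or_ge b' (S.e S.kstar) with hb'e | heb'
      · refine ⟨a', b', hsub', hy', hb'e, hlen.trans ?_⟩
        rw [pow_succ, mul_assoc]
        gcongr
        exact pow_nonneg S.rho_nonneg m
      -- the image has reached the fixed point `e kstar`: switch to the endgame
      have hqa' : S.q (S.kstar + 1) < a' := lt_of_not_ge fun h =>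
        T_ne_zero_of_mem_image hI (hsub' ⟨h, S.e_mem.1.le.trans heb'⟩) (S.hTq _ (by omega))
      exact (not_Icc_e_subset_image hI hqa' (hy'.1.trans_lt (horb (m + 1)).2)
        ((Icc_subset_Icc_right heb').trans hsub')).elim
  refine not_forall_le_pow_mul (B := S.e S.kstar) (sub_pos.2 hab) S.rho_nonneg S.rho_lt_one
    fun m => ?_
  obtain ⟨a, b, hsub, hy, hbe, hlen⟩ := key m
  have ha := pos_of_Icc_subset_image hI hsub ((horb m).1.trans hy.2)
  exact hlen.trans (by gcongr; exacts [pow_nonneg S.rho_nonneg m, by linarith])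

lemma zero_mem_Omega : (0 : ℝ) ∈ S.Omega := ⟨⟨le_rfl, (S.hp_pos _).le⟩, 1, le_rfl, S.hT0⟩

lemma iterate_succ_ne_zero_of_notMem_Omega {y : ℝ} (hy : y ∈ S.Jstar) (hyΩ : y ∉ S.Omega)
    (n : ℕ) : S.T^[n + 1] y ≠ 0 :=
  fun h => hyΩ ⟨hy, n + 1, by omega, h⟩

end SawMapSetup

open SawMapSetup in
/-- Under the saw map setup, if `1/α kstar + 1/β kstar ≥ 1`, then every point of `J* \ Σ`
eventually stays in the segment `J kstar = [e kstar, p kstar]`. -/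
theorem eventually_in_Jkstar (S : SawMapSetup)
    (hslope : 1 ≤ 1 / S.alpha S.kstar + 1 / S.beta S.kstar) :
    ∀ x ∈ S.Jstar, x ∉ S.Sig →
      ∃ n : ℕ, ∀ i, n ≤ i → S.T^[i] x ∈ S.Jk S.kstar := by
  have hpq := p_le_q_sub_q hslope
  intro x hx hxS
  by_cases hJ : ∃ n, S.T^[n] x ∈ S.Jk S.kstar
  · obtain ⟨n, hn⟩ := hJ
    refine ⟨n, fun i hi => ?_⟩
    obtain ⟨k, rfl⟩ := Nat.exists_eq_add_of_le hi
    rw [add_comm, Function.iterate_add_apply]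
    exact (mapsTo_Jk hpq).iterate k hn
  simp only [not_exists] at hJ
  have horb (n : ℕ) : S.T^[n] x ∈ Ico 0 (S.e S.kstar) :=
    have h := (mapsTo_Jstar hpq).iterate n hx
    ⟨h.1, lt_of_not_ge fun he => hJ n ⟨he, h.2⟩⟩
  have hx0 : 0 < x := hx.1.lt_of_ne fun h => hxS (subset_closure (h ▸ zero_mem_Omega))
  have hnhds : Ioo 0 (S.e S.kstar) ∩ S.Omegaᶜ ∈ 𝓝 x :=
    inter_mem (Ioo_mem_nhds hx0 (horb 0).2) <| mem_of_superset
      (isClosed_closure.isOpen_compl.mem_nhds hxS) (compl_subset_compl.2 subset_closure)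
  obtain ⟨δ, hδ, hball⟩ := Metric.nhds_basis_closedBall.mem_iff.1 hnhds
  rw [Real.closedBall_eq_Icc] at hball
  refine (false_of_forall_iterate_mem_Ico (fun y hy => iterate_succ_ne_zero_of_notMem_Omega
    ⟨(hball hy).1.1.le, ((hball hy).1.2.trans e_lt_p).le⟩ (hball hy).2) (by linarith)
    (hball ⟨by linarith, le_rfl⟩).1.2 ⟨by linarith, by linarith⟩ horb).elim
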